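/- arXiv:2408.16839 — 3 statements merged into one kernel-verified Lean document; each statement's English description precedes it below -/
import Mathlib

section
/- Suppose (W,S) is a Coxeter system of type Λ and let α and β be two braid equivalent reduced expressions of dimension at least one. A braid sequence b_1^{j_1}, b_2^{j_2}, …, b_k^{j_k} from α to β is minimal if and only if each index j_i appears exactly once in the sequence (i.e., j_1, …, j_k are pairwise distinct). -/
open scoped Classical

namespace Braid

variable {B : Type*}

/-- A Coxeter matrix is *simply laced* if all of its entries are 1, 2 or 3
(in particular, no entry is `0`, which encodes `m(s,t) = ∞`). -/
def SimplyLaced (M : CoxeterMatrix B) : Prop := ∀ s t : B, 1 ≤ M s t ∧ M s t ≤ 3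

/-- The Coxeter graph has an edge between `s` and `t` iff `m(s,t) ≥ 3`
(where the entry `0` encodes `∞`). -/
def CoxEdge (M : CoxeterMatrix B) (s t : B) : Prop := M s t = 0 ∨ 3 ≤ M s t

/-- A Coxeter matrix is *triangle free* if its Coxeter graph contains no three-cycles. -/
def TriangleFree (M : CoxeterMatrix B) : Prop :=
  ∀ s t u : B, ¬ (CoxEdge M s t ∧ CoxEdge M t u ∧ CoxEdge M s u)

/-- A Coxeter system is of *type Λ* if it is simply laced and triangle free. -/
def TypeLambda (M : CoxeterMatrix B) : Prop := SimplyLaced M ∧ TriangleFree M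

/-- `y` is obtained from `x` by replacing the factor `s t s` occupying the (0-based)
positions `p, p+1, p+2` by `t s t`, where `m(s,t) = 3`. -/
def BraidMoveAt (M : CoxeterMatrix B) (x y : List B) (p : ℕ) : Prop :=
  ∃ s t : B, M s t = 3 ∧
    x = x.take p ++ [s, t, s] ++ x.drop (p + 3) ∧
    y = x.take p ++ [t, s, t] ++ x.drop (p + 3)

/-- `x` and `y` differ by a single braid move (applied to `x`). -/
def BraidMove (M : CoxeterMatrix B) (x y : List B) : Prop := ∃ p, BraidMoveAt M x y p

/-- Two words are *braid equivalent* if one is obtained from the other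
by a sequence of braid moves. -/
def BraidEquiv (M : CoxeterMatrix B) : List B → List B → Prop :=
  Relation.ReflTransGen (BraidMove M)

/-- The braid class of `α`. -/
def braidClass (M : CoxeterMatrix B) (α : List B) : Set (List B) := {x | BraidEquiv M α x}

/-- The braid graph of `α`: vertices are the members of the braid class of `α`, with two
vertices adjacent iff they differ by a single braid move. -/
def braidGraph (M : CoxeterMatrix B) (α : List B) : SimpleGraph (braidClass M α) :=
  SimpleGraph.fromRel (fun x y => BraidMove M x.1 y.1)

/-- `c` is the (1-based) center of a braid shadow of `β`; that is, the interval of 1-based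
positions `⟦c-1, c+1⟧` is a braid shadow of `β`. -/
def ShadowCenter (M : CoxeterMatrix B) (β : List B) (c : ℕ) : Prop :=
  2 ≤ c ∧ ∃ s t : B, M s t = 3 ∧ β = β.take (c - 2) ++ [s, t, s] ++ β.drop (c + 1)

/-- The set of (1-based) centers of the braid shadows of the braid class `[α]`. -/
def classCenters (M : CoxeterMatrix B) (α : List B) : Set ℕ :=
  {c | ∃ β ∈ braidClass M α, ShadowCenter M β c}

/-- The dimension of `α`: the number of braid shadows of `[α]`. -/
noncomputable def braidDim (M : CoxeterMatrix B) (α : List B) : ℕ :=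
  (classCenters M α).ncard

/-- The (1-based) center of the `i`-th braid shadow of `[α]`, the braid shadows being
numbered `1, …, braidDim M α` from left to right. -/
noncomputable def nthCenter (M : CoxeterMatrix B) (α : List B) (i : ℕ) : ℕ :=
  Nat.nth (· ∈ classCenters M α) (i - 1)

/-- The `i`-th entry of the signature of `x ∈ [α]`: the letter of `x` appearing in the
center of the `i`-th braid shadow of `[α]`. -/
noncomputable def sig (M : CoxeterMatrix B) (α x : List B) (i : ℕ) : Option B :=
  x[nthCenter M α i - 1]?

/-- `sigbar M α x i` is the set of members of `[α]` whose signature agrees with that of `x`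
in position `i`. -/
noncomputable def sigbar (M : CoxeterMatrix B) (α x : List B) (i : ℕ) :
    Set (braidClass M α) :=
  {y | sig M α y.1 i = sig M α x i}

/-- `x` and `y` differ by a single braid move occurring in the `j`-th braid shadow
of `[α]` (i.e. the edge `{x,y}` of the braid graph is labeled by `j`). -/
noncomputable def EdgeLabeled (M : CoxeterMatrix B) (α x y : List B) (j : ℕ) : Prop :=
  1 ≤ j ∧ j ≤ braidDim M α ∧
    (BraidMoveAt M x y (nthCenter M α j - 2) ∨ BraidMoveAt M y x (nthCenter M α j - 2))

/-- `x` and `y` differ by a single braid move occurring in the braid shadow with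
(1-based) center `c`. -/
def MoveAtCenter (M : CoxeterMatrix B) (x y : List B) (c : ℕ) : Prop :=
  BraidMoveAt M x y (c - 2) ∨ BraidMoveAt M y x (c - 2)

/-- `BraidSeq M α js x y` : the list `js` of braid-shadow numbers records a braid sequence
transforming `x` into `y`, each move being applied in the indicated braid shadow of `[α]`. -/
noncomputable def BraidSeq (M : CoxeterMatrix B) (α : List B) :
    List ℕ → List B → List B → Prop
  | [], x, y => x = y
  | j :: js, x, y => ∃ z, EdgeLabeled M α x z j ∧ BraidSeq M α js z y

/-- A braid sequence from `x` to `y` is *minimal* if no shorter braid sequence from `x`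
to `y` exists. -/
noncomputable def MinimalBraidSeq (M : CoxeterMatrix B) (α : List B)
    (js : List ℕ) (x y : List B) : Prop :=
  BraidSeq M α js x y ∧ ∀ ls : List ℕ, BraidSeq M α ls x y → js.length ≤ ls.length

/-- `Δ(sig(α), sig(β))`: the number of positions at which the signatures of `α` and `β`
differ. -/
noncomputable def sigDelta (M : CoxeterMatrix B) (α β : List B) : ℕ :=
  {i | 1 ≤ i ∧ i ≤ braidDim M α ∧ sig M α α i ≠ sig M α β i}.ncard

/-- A reduced expression is a *link* if it has length 1, or it has odd length `m` and the
braid shadows of its braid class are exactly `⟦1,3⟧, ⟦3,5⟧, …, ⟦m-2,m⟧`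
(equivalently, the shadow centers are exactly the even numbers `2, 4, …, m-1`). -/
def IsLink (M : CoxeterMatrix B) (α : List B) : Prop :=
  1 ≤ α.length ∧
    (α.length = 1 ∨ (Odd α.length ∧
      classCenters M α = {c | Even c ∧ 2 ≤ c ∧ c + 1 ≤ α.length}))

/-- `maj M α β γ i`: the majority among the `i`-th signature entries of `α`, `β`, `γ`. -/
noncomputable def maj (M : CoxeterMatrix B) (α β γ : List B) (i : ℕ) : Option B :=
  if sig M α α i = sig M α β i ∨ sig M α α i = sig M α γ i then sig M α α i
  else sig M α β i

/-- `sigbarPair M α x y`: the set of members of `[α]` whose signature agrees with the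
common signature entries of `x` and `y`. -/
noncomputable def sigbarPair (M : CoxeterMatrix B) (α x y : List B) :
    Set (braidClass M α) :=
  {z | ∀ i : ℕ, 1 ≤ i → i ≤ braidDim M α →
    sig M α x i = sig M α y i → sig M α z.1 i = sig M α x i}

/-! ### Graph-theoretic notions -/

/-- A set `U` of vertices of a graph is *convex* if every vertex on every geodesic
(shortest path) between two vertices of `U` belongs to `U`. -/
def GraphConvex {V : Type*} (G : SimpleGraph V) (U : Set V) : Prop :=
  ∀ u ∈ U, ∀ v ∈ U, ∀ p : G.Walk u v, p.length = G.dist u v → ∀ x ∈ p.support, x ∈ U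

/-- The interval `I(u,v)`: the set of vertices lying on some geodesic between `u` and `v`. -/
def interval {V : Type*} (G : SimpleGraph V) (u v : V) : Set V :=
  {x | ∃ p : G.Walk u v, p.length = G.dist u v ∧ x ∈ p.support}

/-- A connected graph is *median* if any three vertices admit a unique median. -/
def IsMedianGraph {V : Type*} (G : SimpleGraph V) : Prop :=
  G.Connected ∧ ∀ u v w : V,
    ∃! x, x ∈ interval G u v ∩ interval G u w ∩ interval G v w

/-- The hypercube of dimension `n`: vertices are binary strings of length `n`, adjacent
iff they differ in exactly one digit. -/
def hypercube (n : ℕ) : SimpleGraph (Fin n → Bool) :=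
  SimpleGraph.fromRel (fun x y => ∃! i, x i ≠ y i)

/-- A graph is a *partial cube* if it admits an isometric embedding into some hypercube. -/
def IsPartialCube {V : Type*} (G : SimpleGraph V) : Prop :=
  ∃ (n : ℕ) (f : V → Fin n → Bool),
    ∀ u v : V, (hypercube n).dist (f u) (f v) = G.dist u v

/-- The isometric dimension of a graph: the minimal dimension of a hypercube into which it
isometrically embeds. -/
noncomputable def isoDim {V : Type*} (G : SimpleGraph V) : ℕ :=
  sInf {n | ∃ f : V → Fin n → Bool,
    ∀ u v : V, (hypercube n).dist (f u) (f v) = G.dist u v}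

/-- The semicube `W_{uv}` : the set of vertices strictly closer to `u` than to `v`. -/
def semicube {V : Type*} (G : SimpleGraph V) (u v : V) : Set V :=
  {w | G.dist w u < G.dist w v}


/-!
A braid move in the `j`-th shadow changes the middle letter of that shadow. In the braid class
of a reduced word no two braid shadows have adjacent centers, so the move leaves the middle
letters of all other shadows alone. Hence every braid sequence from `α` to `β` uses each shadow
whose middle letters in `α` and `β` differ. A sequence using every shadow at most once uses only
such shadows, so it is minimal.

Conversely, take two moves in the same shadow `j` with no repeated shadow in between. No move in
between lies in a shadow at distance two from `j`. Such a move would replace an end letter of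
shadow `j` by a Coxeter neighbour. The two end letters agree before and after, so both would be
replaced, and with the middle letter they would form a triangle in the Coxeter graph. Hence the
moves in between commute with the two moves in shadow `j`, which then cancel.

Adjacent centers are ruled out with left inversion sequences. A braid move at position `p` swaps
the inversions at `p` and `p + 2`, so an inversion never changes the parity of its position. Take
two words of one braid class with shadows centred at `c` and `c + 1`, joined by a shortest
possible chain of moves. Then no move of the chain comes near `c`, so the two inversions in the
middle are fixed. A computation in a dihedral group then puts the same reflection at two positions
of different parity, which is impossible in a reduced word.
-/

end Braid

namespace List

variable {α : Type*}

theorem getElem?_append_triple (A D : List α) (a b c : α) (k : ℕ) :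
    (A ++ [a, b, c] ++ D)[k]? =
      if k < A.length then A[k]? else if k = A.length then some a
      else if k = A.length + 1 then some b else if k = A.length + 2 then some c
      else D[k - (A.length + 3)]? := by
  rw [append_assoc, getElem?_append]
  split_ifs <;> simp [getElem?_cons, *]
  rw [if_neg (by omega), if_neg (by omega), if_neg (by omega), Nat.sub_sub, Nat.sub_sub,
    Nat.sub_sub]

theorem getElem?_append_triple_swap (L R : List α) (a b c : α) (k : ℕ) :
    (L ++ [c, b, a] ++ R)[k]? =
      (L ++ [a, b, c] ++ R)[Equiv.swap L.length (L.length + 2) k]? := by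
  rw [Equiv.swap_apply_def, getElem?_append_triple, getElem?_append_triple]
  split_ifs <;> first | rfl | omega

theorem getElem?_take_append_triple_append_drop {l : List α} {p : ℕ} (hp : p + 2 < l.length)
    (a b c : α) (k : ℕ) :
    (l.take p ++ [a, b, c] ++ l.drop (p + 3))[k]? =
      if k = p then some a else if k = p + 1 then some b else if k = p + 2 then some c
      else l[k]? := by
  rw [getElem?_append_triple, length_take_of_le (by omega), getElem?_drop]
  split_ifs <;> first | rfl | omega | simp [*] | rw [Nat.add_sub_cancel' (by omega)]

theorem lt_length_of_eq_take_append_triple_append_drop {l : List α} {p : ℕ} {a b c : α}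
    (h : l = l.take p ++ [a, b, c] ++ l.drop (p + 3)) : p + 2 < l.length := by
  have := congrArg length h
  simp only [length_append, length_take, length_cons, length_nil, length_drop] at this
  omega

theorem eq_take_append_triple_append_drop {l : List α} {p : ℕ} {a b c : α}
    (ha : l[p]? = some a) (hb : l[p + 1]? = some b) (hc : l[p + 2]? = some c) :
    l = l.take p ++ [a, b, c] ++ l.drop (p + 3) := by
  refine ext_getElem? fun k => ?_
  rw [getElem?_take_append_triple_append_drop (getElem?_eq_some_iff.mp hc).1]
  split_ifs <;> simp_all

theorem exists_eq_append_cons_append_cons_of_not_nodup {l : List α} (h : ¬ l.Nodup) :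
    ∃ pre a mid post, l = pre ++ a :: mid ++ a :: post ∧ (a :: mid).Nodup := by
  induction l with
  | nil => simp at h
  | cons b l ih =>
    by_cases hl : l.Nodup
    · have hb : b ∈ l := by
        by_contra hb
        exact h (nodup_cons.mpr ⟨hb, hl⟩)
      obtain ⟨mid, post, rfl⟩ := append_of_mem hb
      exact ⟨[], b, mid, post, rfl,
        (perm_middle.nodup_iff.mp hl).sublist ((sublist_append_left mid post).cons_cons b)⟩
    · obtain ⟨pre, a, mid, post, rfl, hmid⟩ := ih hl
      exact ⟨b :: pre, a, mid, post, rfl, hmid⟩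

end List

namespace CoxeterSystem

variable {B W : Type*} [Group W] {M : CoxeterMatrix B} (cs : CoxeterSystem M W)

theorem leftInvSeq_append (ω ω' : List B) :
    cs.leftInvSeq (ω ++ ω') =
      cs.leftInvSeq ω ++ (cs.leftInvSeq ω').map (MulAut.conj (cs.wordProd ω)) := by
  induction ω with
  | nil => simp
  | cons i ω ih => simp [leftInvSeq, ih, wordProd_cons, List.map_map]

theorem simple_mul_simple_mul_simple_of_eq_three {s t : B} (h : M s t = 3) :
    cs.simple s * cs.simple t * cs.simple s = cs.simple t * cs.simple s * cs.simple t := by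
  have := cs.wordProd_braidWord_eq s t
  unfold braidWord at this
  rw [h, M.symmetric, h] at this
  simpa [alternatingWord, wordProd_cons, mul_assoc] using this.symm

theorem wordProd_braid_of_eq_three {s t : B} (h : M s t = 3) :
    cs.wordProd [s, t, s] = cs.wordProd [t, s, t] := by
  simpa [wordProd_cons, mul_assoc] using cs.simple_mul_simple_mul_simple_of_eq_three h

theorem leftInvSeq_braid_of_eq_three {s t : B} (h : M s t = 3) :
    cs.leftInvSeq [s, t, s] =
      [cs.simple s, cs.simple s * cs.simple t * cs.simple s, cs.simple t] := by
  simp only [leftInvSeq, List.map, MulAut.conj_apply, inv_simple, List.cons.injEq, true_and,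
    and_true]
  rw [← cs.simple_mul_simple_mul_simple_of_eq_three h]
  simp [mul_assoc]

end CoxeterSystem

namespace Braid

variable {B : Type*}

section BraidMove

variable {M : CoxeterMatrix B} {x y : List B} {p : ℕ}

theorem braidMoveAt_iff :
    BraidMoveAt M x y p ↔ ∃ s t, M s t = 3 ∧
      x[p]? = some s ∧ x[p + 1]? = some t ∧ x[p + 2]? = some s ∧
      ∀ k, y[k]? = if k = p then some t else if k = p + 1 then some s
        else if k = p + 2 then some t else x[k]? := by
  constructor
  · rintro ⟨s, t, hst, hx, rfl⟩
    have hp := List.lt_length_of_eq_take_append_triple_append_drop hx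
    have hx' (k : ℕ) := congrArg (·[k]?) hx
    simp only [List.getElem?_take_append_triple_append_drop hp] at hx'
    exact ⟨s, t, hst, by simpa using hx' p, by simpa using hx' (p + 1),
      by simpa using hx' (p + 2), List.getElem?_take_append_triple_append_drop hp _ _ _⟩
  · rintro ⟨s, t, hst, hs₀, ht, hs₂, hy⟩
    have hp : p + 2 < x.length := (List.getElem?_eq_some_iff.mp hs₂).1
    refine ⟨s, t, hst, List.eq_take_append_triple_append_drop hs₀ ht hs₂,
      List.ext_getElem? fun k => ?_⟩
    rw [hy, List.getElem?_take_append_triple_append_drop hp]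

theorem exists_braidMoveAt {s t : B} (hst : M s t = 3)
    (hs₀ : x[p]? = some s) (ht : x[p + 1]? = some t) (hs₂ : x[p + 2]? = some s) :
    ∃ y, BraidMoveAt M x y p :=
  ⟨_, s, t, hst, List.eq_take_append_triple_append_drop hs₀ ht hs₂, rfl⟩

theorem shadowCenter_add_two_iff : ShadowCenter M x (p + 2) ↔ ∃ y, BraidMoveAt M x y p := by
  simp [ShadowCenter, BraidMoveAt]

namespace BraidMoveAt

theorem getElem?_of_lt_or_lt (h : BraidMoveAt M x y p) {k : ℕ} (hk : k < p ∨ p + 2 < k) :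
    y[k]? = x[k]? := by
  obtain ⟨s, t, -, -, -, -, hy⟩ := braidMoveAt_iff.mp h
  rw [hy, if_neg (by omega), if_neg (by omega), if_neg (by omega)]

theorem getElem?_succ_ne (h : BraidMoveAt M x y p) : y[p + 1]? ≠ x[p + 1]? := by
  obtain ⟨s, t, hst, -, ht, -, hy⟩ := braidMoveAt_iff.mp h
  rw [hy, if_neg (by omega), if_pos rfl, ht, Ne, Option.some_inj]
  rintro rfl
  simp at hst

theorem symm (h : BraidMoveAt M x y p) : BraidMoveAt M y x p := by
  obtain ⟨s, t, hst, hs₀, ht, hs₂, hy⟩ := braidMoveAt_iff.mp h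
  refine braidMoveAt_iff.mpr ⟨t, s, M.symmetric s t ▸ hst, by simp [hy], by simp [hy],
    by simp [hy], fun k => ?_⟩
  rw [hy]
  split_ifs <;> simp_all

theorem right_unique {y' : List B} (h : BraidMoveAt M x y p) (h' : BraidMoveAt M x y' p) :
    y = y' := by
  obtain ⟨s, t, -, hs₀, ht, -, hy⟩ := braidMoveAt_iff.mp h
  obtain ⟨s', t', -, hs₀', ht', -, hy'⟩ := braidMoveAt_iff.mp h'
  obtain rfl : s = s' := Option.some_injective _ (hs₀.symm.trans hs₀')
  obtain rfl : t = t' := Option.some_injective _ (ht.symm.trans ht')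
  exact List.ext_getElem? fun k => by rw [hy, hy']

theorem comm {z w : List B} {q : ℕ} (h₁ : BraidMoveAt M x z p) (h₂ : BraidMoveAt M z w q)
    (hpq : p + 2 < q ∨ q + 2 < p) : ∃ z', BraidMoveAt M x z' q ∧ BraidMoveAt M z' w p := by
  obtain ⟨s, t, hst, hs₀, ht, hs₂, hz⟩ := braidMoveAt_iff.mp h₁
  obtain ⟨u, v, huv, hu₀, hv, hu₂, hw⟩ := braidMoveAt_iff.mp h₂
  rw [h₁.getElem?_of_lt_or_lt (by omega)] at hu₀ hv hu₂
  obtain ⟨z', hxz'⟩ := exists_braidMoveAt huv hu₀ hv hu₂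
  obtain ⟨u', v', -, hu₀', hv', -, hz'⟩ := braidMoveAt_iff.mp hxz'
  obtain rfl : u' = u := Option.some_injective _ (hu₀'.symm.trans hu₀)
  obtain rfl : v' = v := Option.some_injective _ (hv'.symm.trans hv)
  refine ⟨z', hxz', braidMoveAt_iff.mpr ⟨s, t, hst, ?_, ?_, ?_, fun k => ?_⟩⟩
  · rw [hxz'.getElem?_of_lt_or_lt (by omega), hs₀]
  · rw [hxz'.getElem?_of_lt_or_lt (by omega), ht]
  · rw [hxz'.getElem?_of_lt_or_lt (by omega), hs₂]
  · rw [hw, hz, hz']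
    split_ifs <;> first | rfl | omega

theorem length_eq (h : BraidMoveAt M x y p) : y.length = x.length := by
  obtain ⟨s, t, -, hx, rfl⟩ := h
  have := List.lt_length_of_eq_take_append_triple_append_drop hx
  simp only [List.length_append, List.length_take, List.length_cons, List.length_nil,
    List.length_drop]
  omega

theorem shadowCenter (h : BraidMoveAt M x y p) :
    ShadowCenter M x (p + 2) ∧ ShadowCenter M y (p + 2) :=
  ⟨shadowCenter_add_two_iff.mpr ⟨y, h⟩, shadowCenter_add_two_iff.mpr ⟨x, h.symm⟩⟩

variable {W : Type*} [Group W] {cs : CoxeterSystem M W}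

theorem wordProd_eq (h : BraidMoveAt M x y p) : cs.wordProd y = cs.wordProd x := by
  obtain ⟨s, t, hst, hx, rfl⟩ := h
  conv_rhs => rw [hx]
  simp only [CoxeterSystem.wordProd_append, cs.wordProd_braid_of_eq_three hst]

theorem isReduced (h : BraidMoveAt M x y p) (hx : cs.IsReduced x) : cs.IsReduced y := by
  rw [CoxeterSystem.IsReduced, h.wordProd_eq, h.length_eq, hx]

theorem leftInvSeq_eq (h : BraidMoveAt M x y p) :
    ∃ (s t : B) (γ : MulAut W) (L R : List W), M s t = 3 ∧ L.length = p ∧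
      cs.leftInvSeq x = L ++ [γ (cs.simple s), γ (cs.simple s * cs.simple t * cs.simple s),
        γ (cs.simple t)] ++ R ∧
      cs.leftInvSeq y = L ++ [γ (cs.simple t), γ (cs.simple s * cs.simple t * cs.simple s),
        γ (cs.simple s)] ++ R := by
  obtain ⟨s, t, hst, hx, hy⟩ := h
  have hp : (x.take p).length = p := by
    have := List.lt_length_of_eq_take_append_triple_append_drop hx
    exact List.length_take_of_le (by omega)
  generalize x.take p = A at hx hy hp
  generalize x.drop (p + 3) = D at hx hy
  subst hx hy hp
  refine ⟨s, t, MulAut.conj (cs.wordProd A), cs.leftInvSeq A,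
    (cs.leftInvSeq D).map (MulAut.conj (cs.wordProd (A ++ [s, t, s]))), hst,
    cs.length_leftInvSeq A, ?_, ?_⟩
  · rw [cs.leftInvSeq_append, cs.leftInvSeq_append, cs.leftInvSeq_braid_of_eq_three hst]
    simp
  · rw [cs.leftInvSeq_append, cs.leftInvSeq_append,
      cs.leftInvSeq_braid_of_eq_three (M.symmetric s t ▸ hst),
      ← cs.simple_mul_simple_mul_simple_of_eq_three hst, cs.wordProd_append,
      cs.wordProd_append, cs.wordProd_braid_of_eq_three hst]
    simp

theorem getElem?_leftInvSeq (h : BraidMoveAt M x y p) (j : ℕ) :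
    (cs.leftInvSeq y)[j]? = (cs.leftInvSeq x)[Equiv.swap p (p + 2) j]? := by
  obtain ⟨s, t, γ, L, R, -, rfl, hx, hy⟩ := h.leftInvSeq_eq (cs := cs)
  rw [hx, hy, List.getElem?_append_triple_swap]

theorem getElem?_leftInvSeq_window (h : BraidMoveAt M x y p) :
    ∃ (s t : B) (γ : MulAut W), M s t = 3 ∧ (cs.leftInvSeq x)[p]? = some (γ (cs.simple s)) ∧
      (cs.leftInvSeq x)[p + 1]? = some (γ (cs.simple s * cs.simple t * cs.simple s)) ∧
      (cs.leftInvSeq x)[p + 2]? = some (γ (cs.simple t)) := by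
  obtain ⟨s, t, γ, L, R, hst, rfl, hx, -⟩ := h.leftInvSeq_eq (cs := cs)
  exact ⟨s, t, γ, hst, by simp [hx], by simp [hx], by simp [hx]⟩

end BraidMoveAt

end BraidMove

/-- Positions are 0-based window starts, as in `BraidMoveAt`; the braid shadow with 1-based
center `c` starts at `c - 2`. -/
def MoveChain (M : CoxeterMatrix B) : List ℕ → List B → List B → Prop
  | [], x, y => x = y
  | p :: ps, x, y => ∃ z, BraidMoveAt M x z p ∧ MoveChain M ps z y

section MoveChain

variable {M : CoxeterMatrix B} {W : Type*} [Group W] {cs : CoxeterSystem M W} {ps qs : List ℕ}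
  {x y : List B}

@[simp] theorem moveChain_nil : MoveChain M [] x y ↔ x = y := Iff.rfl

@[simp] theorem moveChain_cons {p : ℕ} :
    MoveChain M (p :: ps) x y ↔ ∃ z, BraidMoveAt M x z p ∧ MoveChain M ps z y := Iff.rfl

theorem moveChain_append :
    MoveChain M (ps ++ qs) x y ↔ ∃ z, MoveChain M ps x z ∧ MoveChain M qs z y := by
  induction ps generalizing x with
  | nil => simp
  | cons p ps ih =>
    simp only [List.cons_append, moveChain_cons, ih]
    aesop

theorem MoveChain.reverse (h : MoveChain M ps x y) : MoveChain M ps.reverse y x := by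
  induction ps generalizing x with
  | nil => exact h.symm
  | cons p ps ih =>
    obtain ⟨z, hxz, hzy⟩ := h
    rw [List.reverse_cons]
    exact moveChain_append.mpr ⟨z, ih hzy, moveChain_cons.mpr ⟨x, hxz.symm, rfl⟩⟩

theorem BraidEquiv.exists_moveChain (h : BraidEquiv M x y) : ∃ ps, MoveChain M ps x y := by
  induction h with
  | refl => exact ⟨[], rfl⟩
  | tail _ hmove ih =>
    obtain ⟨ps, hps⟩ := ih
    obtain ⟨p, hp⟩ := hmove
    exact ⟨ps ++ [p], moveChain_append.mpr ⟨_, hps, moveChain_cons.mpr ⟨_, hp, rfl⟩⟩⟩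

theorem MoveChain.length_eq (h : MoveChain M ps x y) : y.length = x.length := by
  induction ps generalizing x with
  | nil => rw [h]
  | cons p ps ih =>
    obtain ⟨z, hxz, hzy⟩ := h
    rw [ih hzy, hxz.length_eq]

theorem MoveChain.isReduced (h : MoveChain M ps x y) (hx : cs.IsReduced x) :
    cs.IsReduced y := by
  induction ps generalizing x with
  | nil => rwa [← h]
  | cons p ps ih =>
    obtain ⟨z, hxz, hzy⟩ := h
    exact ih hzy (hxz.isReduced hx)

theorem MoveChain.getElem?_eq (h : MoveChain M ps x y) {k : ℕ}
    (hk : ∀ q ∈ ps, k < q ∨ q + 2 < k) : y[k]? = x[k]? := by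
  induction ps generalizing x with
  | nil => rw [h]
  | cons p ps ih =>
    obtain ⟨z, hxz, hzy⟩ := h
    rw [ih hzy fun q hq => hk q (List.mem_cons_of_mem p hq),
      hxz.getElem?_of_lt_or_lt (hk p List.mem_cons_self)]

theorem MoveChain.exists_getElem?_eq_three_of_unique (h : MoveChain M ps x y) (hnd : ps.Nodup)
    {q k : ℕ} (hq : q ∈ ps) (hk : k = q ∨ k = q + 2)
    (hother : ∀ q' ∈ ps, q' ≠ q → k < q' ∨ q' + 2 < k) :
    ∃ a b, x[k]? = some a ∧ y[k]? = some b ∧ M a b = 3 := by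
  obtain ⟨l₁, l₂, rfl⟩ := List.append_of_mem hq
  obtain ⟨z, hxz, z', hzz', hz'y⟩ := moveChain_append.mp h
  obtain ⟨-, hnd₂, hdisj⟩ := List.nodup_append.mp hnd
  have hxz : z[k]? = x[k]? := hxz.getElem?_eq fun q' hq' =>
    hother q' (List.mem_append_left _ hq') (hdisj q' hq' q List.mem_cons_self)
  have hz'y : y[k]? = z'[k]? := hz'y.getElem?_eq fun q' hq' =>
    hother q' (List.mem_append_right _ (List.mem_cons_of_mem q hq'))
      (fun he => (List.nodup_cons.mp hnd₂).1 (he ▸ hq'))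
  obtain ⟨s, t, hst, hs₀, -, hs₂, hz'⟩ := braidMoveAt_iff.mp hzz'
  refine ⟨s, t, ?_, ?_, hst⟩
  · rw [← hxz]
    rcases hk with rfl | rfl <;> assumption
  · rw [hz'y, hz']
    rcases hk with rfl | rfl <;> simp

theorem MoveChain.getElem?_window_end (h : MoveChain M ps x y) (hnd : ps.Nodup) {p k : ℕ}
    (hk : k = p ∨ k = p + 2) (hfar : ∀ q ∈ ps, q + 1 < p ∨ p + 1 < q) {a b : B}
    (ha : x[k]? = some a) (hb : y[k]? = some b) :
    (∀ q ∈ ps, k < q ∨ q + 2 < k) ∧ b = a ∨ M a b = 3 := by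
  by_cases htouch : ∃ q ∈ ps, q ≤ k ∧ k ≤ q + 2
  · obtain ⟨q, hq, hqk⟩ := htouch
    have := hfar q hq
    obtain ⟨a', b', ha', hb', hM⟩ := h.exists_getElem?_eq_three_of_unique hnd hq (k := k)
      (by omega) fun q' hq' hne => by
        have := hfar q' hq'
        omega
    rw [ha, Option.some_inj] at ha'
    rw [hb, Option.some_inj] at hb'
    exact .inr (ha' ▸ hb' ▸ hM)
  · push Not at htouch
    have hk' (q : ℕ) (hq : q ∈ ps) : k < q ∨ q + 2 < k := by
      have := htouch q hq
      omega
    rw [h.getElem?_eq hk', ha, Option.some_inj] at hb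
    exact .inl ⟨hk', hb.symm⟩

theorem MoveChain.cancel {u v w w' : List B} {p : ℕ} (h₁ : BraidMoveAt M u v p)
    (h : MoveChain M ps v w) (h₂ : BraidMoveAt M w w' p)
    (hdisj : ∀ q ∈ ps, q + 2 < p ∨ p + 2 < q) : MoveChain M ps u w' := by
  induction ps generalizing u v with
  | nil => exact h₁.symm.right_unique (h ▸ h₂ : BraidMoveAt M v w' p)
  | cons q ps ih =>
    obtain ⟨z, hvz, hzw⟩ := h
    obtain ⟨v₁, huv₁, hv₁z⟩ := h₁.comm hvz (hdisj q List.mem_cons_self).symm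
    exact ⟨v₁, huv₁, ih hv₁z hzw fun q' hq' => hdisj q' (List.mem_cons_of_mem q hq')⟩

theorem MoveChain.windows_disjoint_of_triangleFree (hM : TriangleFree M) {v v' w w' : List B}
    {p : ℕ} (h₁ : BraidMoveAt M v v' p) (h : MoveChain M ps v w) (h₂ : BraidMoveAt M w w' p)
    (hnd : (p :: ps).Nodup) (hadj : ∀ q ∈ p :: ps, q + 1 ∉ p :: ps) :
    ∀ q ∈ ps, q + 2 < p ∨ p + 2 < q := by
  have hfar (q : ℕ) (hq : q ∈ ps) : q + 1 < p ∨ p + 1 < q := by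
    have : q ≠ p := fun he => (List.nodup_cons.mp hnd).1 (he ▸ hq)
    have : q + 1 ≠ p := fun he => hadj q (List.mem_cons_of_mem p hq) (he ▸ List.mem_cons_self)
    have : p + 1 ≠ q := fun he => hadj p List.mem_cons_self (he ▸ List.mem_cons_of_mem p hq)
    omega
  obtain ⟨s, t, hst, hs₀, ht, hs₂, -⟩ := braidMoveAt_iff.mp h₁
  obtain ⟨a, b, hab, ha₀, hb, ha₂, -⟩ := braidMoveAt_iff.mp h₂
  obtain rfl : t = b := by
    rw [h.getElem?_eq fun q hq => by have := hfar q hq; omega, ht] at hb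
    exact Option.some_injective _ hb
  -- an end of the window `p` moved by `ps` becomes a Coxeter neighbour of `s`, so `a ≠ s`:
  -- either no end moves, or both do and `s t a` is a triangle
  have hss : M s s ≠ 3 := by simp
  have hnd' := (List.nodup_cons.mp hnd).2
  rcases h.getElem?_window_end hnd' (.inl rfl) hfar hs₀ ha₀ with ⟨hL, has⟩ | hL <;>
    rcases h.getElem?_window_end hnd' (.inr rfl) hfar hs₂ ha₂ with ⟨hR, has'⟩ | hR
  · intro q hq
    have := hL q hq
    have := hR q hq
    omega
  · exact absurd (has ▸ hR) hss
  · exact absurd (has' ▸ hL) hss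
  · exact absurd ⟨.inr hst.ge, .inr (M.symmetric a t ▸ hab).ge, .inr hL.ge⟩ (hM s t a)

theorem MoveChain.length_le_of_nodup {ps' : List ℕ} (h : MoveChain M ps x y)
    (h' : MoveChain M ps' x y) (hnd : ps.Nodup) (hadj : ∀ q ∈ ps ++ ps', q + 1 ∉ ps ++ ps') :
    ps.length ≤ ps'.length := by
  refine hnd.length_le_of_subset fun q hq => ?_
  have hfar (q' : ℕ) (hq' : q' ∈ ps ++ ps') (hne : q' ≠ q) :
      q + 1 < q' ∨ q' + 2 < q + 1 := by
    have := hadj q (List.mem_append_left _ hq)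
    have := hadj q' hq'
    have : q + 1 ≠ q' := fun he => by simp_all
    have : q' + 1 ≠ q := fun he => by simp_all
    omega
  -- only a move at `q` changes the middle letter of the window `q`, and `ps` makes one
  have hne : y[q + 1]? ≠ x[q + 1]? := by
    obtain ⟨l₁, l₂, rfl⟩ := List.append_of_mem hq
    obtain ⟨z, hxz, z', hzz', hz'y⟩ := moveChain_append.mp h
    obtain ⟨-, hnd₂, hdisj⟩ := List.nodup_append.mp hnd
    rw [hz'y.getElem?_eq fun q' hq' => hfar q' (by simp [hq'])
        fun he => (List.nodup_cons.mp hnd₂).1 (he ▸ hq'),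
      ← hxz.getElem?_eq fun q' hq' => hfar q' (by simp [hq'])
        (hdisj q' hq' q List.mem_cons_self)]
    exact hzz'.getElem?_succ_ne
  by_contra hq'
  exact hne (h'.getElem?_eq fun q' hq'' => hfar q' (List.mem_append_right _ hq'')
    fun he => hq' (he ▸ hq''))

theorem MoveChain.exists_getElem?_leftInvSeq (h : MoveChain M ps x y) :
    ∃ f : ℕ → ℕ, (∀ j, f j % 2 = j % 2) ∧
      ∀ j, (cs.leftInvSeq y)[j]? = (cs.leftInvSeq x)[f j]? := by
  induction ps generalizing x with
  | nil => exact ⟨id, fun _ => rfl, fun j => by rw [h]; rfl⟩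
  | cons p ps ih =>
    obtain ⟨z, hxz, hzy⟩ := h
    obtain ⟨f, hf, hfy⟩ := ih hzy
    refine ⟨Equiv.swap p (p + 2) ∘ f, fun j => ?_, fun j => by
      rw [hfy, hxz.getElem?_leftInvSeq]; rfl⟩
    have := hf j
    simp only [Function.comp, Equiv.swap_apply_def]
    split_ifs <;> omega

theorem MoveChain.getElem?_leftInvSeq_eq (h : MoveChain M ps x y) {j : ℕ}
    (hj : ∀ q ∈ ps, q ≠ j ∧ q + 2 ≠ j) :
    (cs.leftInvSeq y)[j]? = (cs.leftInvSeq x)[j]? := by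
  induction ps generalizing x with
  | nil => rw [h]
  | cons p ps ih =>
    obtain ⟨z, hxz, hzy⟩ := h
    have hp := hj p List.mem_cons_self
    rw [ih hzy fun q hq => hj q (List.mem_cons_of_mem p hq), hxz.getElem?_leftInvSeq,
      Equiv.swap_apply_of_ne_of_ne (Ne.symm hp.1) (Ne.symm hp.2)]

/-- With the two middle inversions fixed, the inversion at position `p` of `x` reappears at
position `p + 3` of `y`, of the other parity; this is impossible as `x` is reduced. -/
theorem MoveChain.false_of_leftInvSeq_eq (hx : cs.IsReduced x) (h : MoveChain M ps x y)
    {p : ℕ} {x' y' : List B} (hxx' : BraidMoveAt M x x' p) (hyy' : BraidMoveAt M y y' (p + 1))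
    (h₁ : (cs.leftInvSeq y)[p + 1]? = (cs.leftInvSeq x)[p + 1]?)
    (h₂ : (cs.leftInvSeq y)[p + 2]? = (cs.leftInvSeq x)[p + 2]?) : False := by
  obtain ⟨s, t, γ, hst, hx₀, hx₁, hx₂⟩ := hxx'.getElem?_leftInvSeq_window (cs := cs)
  obtain ⟨u, v, δ, -, hy₁, hy₂, hy₃⟩ := hyy'.getElem?_leftInvSeq_window (cs := cs)
  rw [hy₁, hx₁, Option.some_inj] at h₁
  rw [hy₂, hx₂, Option.some_inj] at h₂
  have hδv : δ (cs.simple v) = γ (cs.simple s) := calc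
    δ (cs.simple v) = δ (cs.simple u) * δ (cs.simple u * cs.simple v * cs.simple u) *
        δ (cs.simple u) := by simp [← map_mul, mul_assoc]
    _ = γ (cs.simple s * cs.simple t * cs.simple s * cs.simple t *
        (cs.simple s * cs.simple t * cs.simple s)) := by rw [h₁, h₂]; simp [map_mul]
    _ = γ (cs.simple s) := by
      nth_rw 2 [cs.simple_mul_simple_mul_simple_of_eq_three hst]
      simp [mul_assoc]
  obtain ⟨f, hf, hfy⟩ := h.exists_getElem?_leftInvSeq (cs := cs)
  have hfp : p = f (p + 3) := by
    rw [← List.getElem?_inj (List.getElem?_eq_some_iff.mp hx₀).1 hx.nodup_leftInvSeq, hx₀,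
      ← hfy, (by omega : p + 3 = p + 1 + 2), hy₃, hδv]
  have := hf (p + 3)
  omega

theorem MoveChain.not_shadowCenter_succ (hx : cs.IsReduced x) (h : MoveChain M ps x y)
    {c : ℕ} (hxc : ShadowCenter M x c) : ¬ ShadowCenter M y (c + 1) := by
  induction hn : ps.length using Nat.strong_induction_on generalizing ps x y c with
  | _ n ih =>
  intro hyc
  obtain ⟨p, rfl⟩ : ∃ p, c = p + 2 := ⟨c - 2, by have := hxc.1; omega⟩
  -- a move near the two shadows would give a shorter counterexample
  have hfar (q : ℕ) (hq : q ∈ ps) : q + 1 < p ∨ p + 2 < q := by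
    obtain ⟨l₁, l₂, rfl⟩ := List.append_of_mem hq
    obtain ⟨z, hxz, z', hzz', hz'y⟩ := moveChain_append.mp h
    have hz := hxz.isReduced hx
    obtain ⟨hzq, hz'q⟩ := hzz'.shadowCenter
    simp only [List.length_append, List.length_cons] at hn
    by_contra hnear
    obtain hq | rfl | rfl | rfl : q + 1 = p ∨ q = p ∨ q = p + 1 ∨ q = p + 2 := by omega
    · subst hq
      exact ih _ (by omega) hz hxz.reverse hzq List.length_reverse hxc
    · exact ih _ (by omega) (hzz'.isReduced hz) hz'y hz'q rfl hyc
    · exact ih _ (by omega) hx hxz hxc rfl hzq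
    · exact ih _ (by omega) (h.isReduced hx) hz'y.reverse hyc List.length_reverse hz'q
  obtain ⟨x', hxx'⟩ := shadowCenter_add_two_iff.mp hxc
  obtain ⟨y', hyy'⟩ := shadowCenter_add_two_iff.mp hyc
  exact h.false_of_leftInvSeq_eq hx hxx' hyy'
    (h.getElem?_leftInvSeq_eq fun q hq => by have := hfar q hq; omega)
    (h.getElem?_leftInvSeq_eq fun q hq => by have := hfar q hq; omega)

end MoveChain

section Shadows

variable {M : CoxeterMatrix B} {W : Type*} [Group W] {cs : CoxeterSystem M W} {α x y : List B}
  {js ls : List ℕ}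

theorem two_le_of_mem_classCenters {c : ℕ} (hc : c ∈ classCenters M α) : 2 ≤ c :=
  let ⟨_, _, hc⟩ := hc
  hc.1

theorem succ_notMem_classCenters (hα : cs.IsReduced α) {c : ℕ} (hc : c ∈ classCenters M α) :
    c + 1 ∉ classCenters M α := by
  rintro ⟨y, hy, hyc⟩
  obtain ⟨x, hx, hxc⟩ := hc
  obtain ⟨ps, hps⟩ := BraidEquiv.exists_moveChain hx
  obtain ⟨qs, hqs⟩ := BraidEquiv.exists_moveChain hy
  exact (moveChain_append.mpr ⟨α, hps.reverse, hqs⟩).not_shadowCenter_succ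
    (hps.isReduced hα) hxc hyc

theorem classCenters_finite (α : List B) : (classCenters M α).Finite := by
  refine (Set.finite_Iio α.length).subset ?_
  rintro c ⟨x, hx, hxc⟩
  obtain ⟨p, rfl⟩ : ∃ p, c = p + 2 := ⟨c - 2, by have := hxc.1; omega⟩
  obtain ⟨y, hxy⟩ := shadowCenter_add_two_iff.mp hxc
  obtain ⟨ps, hps⟩ := BraidEquiv.exists_moveChain hx
  obtain ⟨s, -, -, -, -, hs₂, -⟩ := braidMoveAt_iff.mp hxy
  have := (List.getElem?_eq_some_iff.mp hs₂).1
  rw [Set.mem_Iio, ← hps.length_eq]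
  omega

theorem sub_one_lt_card_classCenters {j : ℕ} (hj : j ∈ Set.Icc 1 (braidDim M α)) :
    j - 1 < (classCenters_finite (M := M) α).toFinset.card := by
  rw [← Set.ncard_eq_toFinset_card _ (classCenters_finite α)]
  obtain ⟨hj₁, hj₂⟩ := hj
  rw [braidDim] at hj₂
  omega

theorem nthCenter_mem {j : ℕ} (hj : j ∈ Set.Icc 1 (braidDim M α)) :
    nthCenter M α j ∈ classCenters M α :=
  Nat.nth_mem_of_lt_card _ (sub_one_lt_card_classCenters hj)

theorem nthCenter_injOn (α : List B) : (Set.Icc 1 (braidDim M α)).InjOn (nthCenter M α) := by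
  intro i hi j hj hij
  have := Nat.nth_injOn _ (sub_one_lt_card_classCenters hi) (sub_one_lt_card_classCenters hj) hij
  have := hi.1
  have := hj.1
  omega

theorem nodup_map_nthCenter (hjs : ∀ j ∈ js, j ∈ Set.Icc 1 (braidDim M α)) (hnd : js.Nodup) :
    (js.map (nthCenter M α · - 2)).Nodup := by
  refine hnd.map_on fun i hi j hj hij => nthCenter_injOn α (hjs i hi) (hjs j hj) ?_
  have := two_le_of_mem_classCenters (nthCenter_mem (hjs i hi))
  have := two_le_of_mem_classCenters (nthCenter_mem (hjs j hj))
  omega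

theorem succ_notMem_map_nthCenter (hα : cs.IsReduced α)
    (hjs : ∀ j ∈ js, j ∈ Set.Icc 1 (braidDim M α)) :
    ∀ q ∈ js.map (nthCenter M α · - 2), q + 1 ∉ js.map (nthCenter M α · - 2) := by
  simp only [List.mem_map]
  rintro _ ⟨i, hi, rfl⟩ ⟨j, hj, hij⟩
  have hci := nthCenter_mem (hjs i hi)
  have hcj := nthCenter_mem (hjs j hj)
  have := two_le_of_mem_classCenters hci
  have := two_le_of_mem_classCenters hcj
  exact succ_notMem_classCenters hα hci
    (by rwa [show nthCenter M α i + 1 = nthCenter M α j by omega])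

theorem edgeLabeled_iff {j : ℕ} :
    EdgeLabeled M α x y j ↔
      j ∈ Set.Icc 1 (braidDim M α) ∧ BraidMoveAt M x y (nthCenter M α j - 2) := by
  simp only [EdgeLabeled, Set.mem_Icc, and_assoc]
  exact and_congr_right fun _ => and_congr_right fun _ => ⟨fun h => h.elim id .symm, .inl⟩

theorem braidSeq_iff_moveChain :
    BraidSeq M α js x y ↔ (∀ j ∈ js, j ∈ Set.Icc 1 (braidDim M α)) ∧
      MoveChain M (js.map (nthCenter M α · - 2)) x y := by
  induction js generalizing x with
  | nil => simp [BraidSeq]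
  | cons j js ih =>
    simp only [BraidSeq, edgeLabeled_iff, ih, List.map_cons, moveChain_cons,
      List.forall_mem_cons]
    aesop

theorem BraidSeq.length_le_of_nodup (hα : cs.IsReduced α) (h : BraidSeq M α js x y)
    (h' : BraidSeq M α ls x y) (hnd : js.Nodup) : js.length ≤ ls.length := by
  obtain ⟨hjs, hps⟩ := braidSeq_iff_moveChain.mp h
  obtain ⟨hls, hps'⟩ := braidSeq_iff_moveChain.mp h'
  have hadj := succ_notMem_map_nthCenter hα (js := js ++ ls)
    fun j hj => (List.mem_append.mp hj).elim (hjs j) (hls j)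
  rw [List.map_append] at hadj
  simpa using hps.length_le_of_nodup hps' (nodup_map_nthCenter hjs hnd) hadj

theorem BraidSeq.exists_shorter_of_not_nodup (hM : TriangleFree M) (hα : cs.IsReduced α)
    (h : BraidSeq M α js x y) (hnd : ¬ js.Nodup) :
    ∃ ls, BraidSeq M α ls x y ∧ ls.length < js.length := by
  obtain ⟨pre, j, mid, post, rfl, hjmid⟩ :=
    List.exists_eq_append_cons_append_cons_of_not_nodup hnd
  obtain ⟨hjs, hps⟩ := braidSeq_iff_moveChain.mp h
  simp only [List.append_assoc, List.cons_append, List.map_append, List.map_cons,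
    moveChain_append, moveChain_cons] at hps
  obtain ⟨u, hpre, v, huv, w, hmid, w', hww', hpost⟩ := hps
  have hjmid' : ∀ i ∈ j :: mid, i ∈ Set.Icc 1 (braidDim M α) :=
    fun i hi => hjs i (by simp only [List.mem_cons, List.mem_append] at hi ⊢; tauto)
  have hdisj := hmid.windows_disjoint_of_triangleFree hM huv.symm hww'
    (nodup_map_nthCenter hjmid' hjmid) (succ_notMem_map_nthCenter hα hjmid')
  refine ⟨pre ++ mid ++ post, braidSeq_iff_moveChain.mpr
    ⟨fun i hi => hjs i (by simp only [List.mem_cons, List.mem_append] at hi ⊢; tauto), ?_⟩,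
    by simp⟩
  simp only [List.map_append, moveChain_append]
  exact ⟨w', ⟨u, hpre, hmid.cancel huv hww' hdisj⟩, hpost⟩

end Shadows

theorem braid_seq_minimal_iff_nodup_general
    {B W : Type*} [Group W] (M : CoxeterMatrix B) (cs : CoxeterSystem M W)
    (hM : TypeLambda M) (α β : List B)
    (hα : cs.IsReduced α)
    (js : List ℕ) (hseq : BraidSeq M α js α β) :
    MinimalBraidSeq M α js α β ↔ js.Nodup := by
  constructor
  · intro hmin
    by_contra hnd
    obtain ⟨ls, hls, hlt⟩ := hseq.exists_shorter_of_not_nodup hM.2 hα hnd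
    exact (hmin.2 ls hls).not_gt hlt
  · exact fun hnd => ⟨hseq, fun ls hls => hseq.length_le_of_nodup hα hls hnd⟩

theorem braid_seq_minimal_iff_nodup
    {B W : Type*} [Group W] (M : CoxeterMatrix B) (cs : CoxeterSystem M W)
    (hM : TypeLambda M) (α β : List B)
    (hα : cs.IsReduced α) (hβ : cs.IsReduced β)
    (hequiv : BraidEquiv M α β) (hdim : 1 ≤ braidDim M α)
    (js : List ℕ) (hseq : BraidSeq M α js α β) :
    MinimalBraidSeq M α js α β ↔ js.Nodup :=
  braid_seq_minimal_iff_nodup_general M cs hM α β hα js hseq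

end Braid
end

section
/- If (W,S) is a Coxeter system of type Λ and α is a reduced expression such that the braid graph B(α) contains a 4-cycle, then opposite edges in that 4-cycle correspond to the same braid move, i.e., carry the same label. -/
open scoped Classical

namespace Braid

variable {B : Type*}

lemma bm_length {M : CoxeterMatrix B} {x y : List B} {p : ℕ}
    (h : BraidMoveAt M x y p) : p + 3 ≤ x.length := by
  obtain ⟨s, t, _, hx, _⟩ := h
  have := congrArg List.length hx
  simp [List.length_append, List.length_take, List.length_drop] at this
  omega

lemma getElem?_pattern {u v : List B} {a₀ a₁ a₂ : B} {p : ℕ} (hu : u.length = p) :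
    (u ++ [a₀, a₁, a₂] ++ v)[p]? = some a₀ ∧
    (u ++ [a₀, a₁, a₂] ++ v)[p+1]? = some a₁ ∧
    (u ++ [a₀, a₁, a₂] ++ v)[p+2]? = some a₂ ∧
    (∀ i, i < p → (u ++ [a₀, a₁, a₂] ++ v)[i]? = u[i]?) ∧
    (∀ i, p + 3 ≤ i → (u ++ [a₀, a₁, a₂] ++ v)[i]? = v[i - (p+3)]?) := by
  subst hu
  refine ⟨?_, ?_, ?_, fun i hi => ?_, fun i hi => ?_⟩
  · rw [List.append_assoc, List.getElem?_append_right (le_refl _)]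
    simp
  · rw [List.append_assoc, List.getElem?_append_right (by omega)]
    try simp
  · rw [List.append_assoc, List.getElem?_append_right (by omega)]
    try simp
  · rw [List.append_assoc, List.getElem?_append_left hi]
  · rw [List.getElem?_append_right (by simp; omega)]
    simp

lemma bm_spec {M : CoxeterMatrix B} {x y : List B} {p : ℕ} (h : BraidMoveAt M x y p) :
    ∃ s t : B, M s t = 3 ∧ s ≠ t ∧
      x[p]? = some s ∧ x[p+1]? = some t ∧ x[p+2]? = some s ∧
      y[p]? = some t ∧ y[p+1]? = some s ∧ y[p+2]? = some t ∧
      (∀ i, i < p → x[i]? = y[i]?) ∧ (∀ i, p + 3 ≤ i → x[i]? = y[i]?) ∧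
      y = x.take p ++ [t, s, t] ++ x.drop (p + 3) := by
  obtain ⟨s, t, h3, hx, hy⟩ := h
  have hlen : p + 3 ≤ x.length := bm_length ⟨s, t, h3, hx, hy⟩
  have hne : s ≠ t := by
    rintro rfl
    rw [M.diagonal] at h3
    omega
  have htl : (x.take p).length = p := by
    rw [List.length_take]; omega
  obtain ⟨hx0, hx1, hx2, hxlo, hxhi⟩ :=
    getElem?_pattern (u := x.take p) (v := x.drop (p+3)) (a₀ := s) (a₁ := t) (a₂ := s) htl
  obtain ⟨hy0, hy1, hy2, hylo, hyhi⟩ :=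
    getElem?_pattern (u := x.take p) (v := x.drop (p+3)) (a₀ := t) (a₁ := s) (a₂ := t) htl
  refine ⟨s, t, h3, hne, ?_, ?_, ?_, ?_, ?_, ?_, fun i hi => ?_, fun i hi => ?_, hy⟩
  · conv_lhs => rw [hx]
    exact hx0
  · conv_lhs => rw [hx]
    exact hx1
  · conv_lhs => rw [hx]
    exact hx2
  · conv_lhs => rw [hy]
    exact hy0
  · conv_lhs => rw [hy]
    exact hy1
  · conv_lhs => rw [hy]
    exact hy2
  · conv_lhs => rw [hx]
    conv_rhs => rw [hy]
    rw [hxlo i hi, hylo i hi]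
  · conv_lhs => rw [hx]
    conv_rhs => rw [hy]
    rw [hxhi i hi, hyhi i hi]

lemma bm_symm {M : CoxeterMatrix B} {x y : List B} {p : ℕ}
    (h : BraidMoveAt M x y p) : BraidMoveAt M y x p := by
  obtain ⟨s, t, h3, hx, hy⟩ := h
  have hlen : p + 3 ≤ x.length := bm_length ⟨s, t, h3, hx, hy⟩
  have htl : (x.take p).length = p := by rw [List.length_take]; omega
  have htake : y.take p = x.take p := by
    conv_lhs => rw [hy]
    rw [List.append_assoc, List.take_append_of_le_length (by omega),
      List.take_take, min_self]
  have hdrop : y.drop (p + 3) = x.drop (p + 3) := by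
    conv_lhs => rw [hy]
    rw [List.drop_left' (by simp [htl])]
  refine ⟨t, s, by rw [M.symmetric]; exact h3, ?_, ?_⟩
  · rw [htake, hdrop]; exact hy
  · rw [htake, hdrop]; exact hx

lemma bm_unique_target {M : CoxeterMatrix B} {x y z : List B} {p : ℕ}
    (h1 : BraidMoveAt M x y p) (h2 : BraidMoveAt M x z p) : y = z := by
  obtain ⟨s, t, _, _, hx0, hx1, _, _, _, _, _, _, hy⟩ := bm_spec h1
  obtain ⟨s', t', _, _, hx0', hx1', _, _, _, _, _, _, hz⟩ := bm_spec h2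
  rw [hx0] at hx0'
  rw [hx1] at hx1'
  obtain rfl : s = s' := Option.some.inj hx0'
  obtain rfl : t = t' := Option.some.inj hx1'
  rw [hy, hz]

lemma bm_ne {M : CoxeterMatrix B} {x y : List B} {p : ℕ}
    (h : BraidMoveAt M x y p) (i : ℕ) : x[i]? ≠ y[i]? ↔ (p ≤ i ∧ i ≤ p + 2) := by
  obtain ⟨s, t, _, hne, hx0, hx1, hx2, hy0, hy1, hy2, hlo, hhi, _⟩ := bm_spec h
  constructor
  · intro hd
    constructor <;> by_contra h' <;> push_neg at h'
    · exact hd (hlo i (by omega))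
    · exact hd (hhi i (by omega))
  · rintro ⟨h1, h2⟩
    have : i = p ∨ i = p + 1 ∨ i = p + 2 := by omega
    rcases this with rfl | rfl | rfl
    · rw [hx0, hy0]; simp [hne]
    · rw [hx1, hy1]; simp [Ne.symm hne]
    · rw [hx2, hy2]; simp [hne]

lemma bm_pos_unique {M : CoxeterMatrix B} {x y : List B} {p p' : ℕ}
    (h1 : BraidMoveAt M x y p) (h2 : BraidMoveAt M x y p') : p = p' := by
  have a1 := (bm_ne h2 p).mp ((bm_ne h1 p).mpr (by omega))
  have a2 := (bm_ne h1 p').mp ((bm_ne h2 p').mpr (by omega))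
  omega

lemma core' {M : CoxeterMatrix B} {xa xb xc xd : List B} {p q r u : ℕ}
    (hab : BraidMoveAt M xa xb p) (had : BraidMoveAt M xa xd q)
    (hbc : BraidMoveAt M xb xc r) (hdc : BraidMoveAt M xd xc u)
    (hca : xc ≠ xa) (hpq : p < q) : u = p ∧ r = q := by
  have Dab := bm_ne hab
  have Dad := bm_ne had
  have Dbc := bm_ne hbc
  have Ddc := bm_ne hdc
  -- covering: positions where xb and xd differ lie in [r,r+2] ∪ [u,u+2]
  have cov : ∀ i, xb[i]? ≠ xd[i]? → (r ≤ i ∧ i ≤ r + 2) ∨ (u ≤ i ∧ i ≤ u + 2) := by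
    intro i h
    by_contra hc
    push_neg at hc
    obtain ⟨h1, h2⟩ := hc
    have e1 : xb[i]? = xc[i]? := by
      by_contra h'
      exact absurd ((Dbc i).mp h') (by omega)
    have e2 : xd[i]? = xc[i]? := by
      by_contra h'
      exact absurd ((Ddc i).mp h') (by omega)
    rw [e1, e2] at h
    exact h rfl
  have eqout : ∀ i, (i < p ∨ p + 2 < i) → (i < q ∨ q + 2 < i) → xb[i]? = xd[i]? := by
    intro i h1 h2
    have e1 : xa[i]? = xb[i]? := by
      by_contra h'
      exact absurd ((Dab i).mp h') (by omega)
    have e2 : xa[i]? = xd[i]? := by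
      by_contra h'
      exact absurd ((Dad i).mp h') (by omega)
    rw [← e1, ← e2]
  -- letters
  obtain ⟨s, t, hst3, hstne, ha0, ha1, ha2, hb0, hb1, hb2, hloab, hhiab, _⟩ := bm_spec hab
  obtain ⟨s2, t2, hst3', hstne', ha0', ha1', ha2', hd0, hd1, hd2, hload, hhiad, _⟩ := bm_spec had
  have rcq : r = q → u = p → u = p ∧ r = q := fun h1 h2 => ⟨h2, h1⟩
  have hcase : q = p + 1 ∨ q = p + 2 ∨ p + 3 ≤ q := by omega
  -- helper : r = p leads to contradiction (xc = xa)
  have hrp : r = p → False := by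
    rintro rfl
    exact hca (bm_unique_target hbc (bm_symm hab))
  rcases hcase with rfl | rfl | hq3
  · -- q = p + 1
    have e1 : s2 = t := Option.some.inj (ha0'.symm.trans ha1)
    have e2 : t2 = s := Option.some.inj (ha1'.symm.trans ha2)
    -- xb and xd differ at p and p+3
    have hbdp : xb[p]? ≠ xd[p]? := by
      have : xd[p]? = xa[p]? := (hload p (by omega)).symm
      rw [hb0, this, ha0]
      simp [Ne.symm hstne]
    have hbdp3 : xb[p+3]? ≠ xd[p+3]? := by
      have h1 : xb[p+3]? = xa[p+3]? := (hhiab (p+3) (by omega)).symm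
      have h2 : xa[p+1+2]? = some s2 := ha2'
      have h3 : xd[p+1+2]? = some t2 := hd2
      rw [h1]
      have : (p+1+2) = p + 3 := by omega
      rw [this] at h2 h3
      rw [h2, h3, e1, e2]
      simp [Ne.symm hstne]
    have mp := cov p hbdp
    have mp3 := cov (p+3) hbdp3
    rcases mp with hcr | hcu
    · -- p ∈ [r, r+2]
      rcases Nat.lt_or_ge r p with h | h
      · have h1 : xb[r]? ≠ xc[r]? := (Dbc r).mpr (by omega)
        have h2 : xb[r]? = xd[r]? := eqout r (by omega) (by omega)
        have h3 : xd[r]? ≠ xc[r]? := h2 ▸ h1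
        have h4 := (Ddc r).mp h3
        rcases mp3 with h5 | h5 <;> omega
      · exact absurd (by omega : r = p) (fun hh => hrp hh)
    · -- p ∈ [u, u+2]
      rcases Nat.lt_or_ge u p with h | h
      · have h1 : xd[u]? ≠ xc[u]? := (Ddc u).mpr (by omega)
        have h2 : xb[u]? = xd[u]? := eqout u (by omega) (by omega)
        have h3 : xb[u]? ≠ xc[u]? := h2.symm ▸ h1
        have h4 := (Dbc u).mp h3
        rcases mp3 with h5 | h5 <;> omega
      · have hup : u = p := by omega
        obtain ⟨s4, t4, _, _, hd0'', _, hd2'', _, _, _, _, _, _⟩ := bm_spec hdc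
        rw [hup] at hd0'' hd2''
        have w0 : xd[p]? = some s := by rw [← hload p (by omega)]; exact ha0
        have w2 : xd[p+2]? = some s2 := hd1
        have hs : s = s4 := Option.some.inj (w0.symm.trans hd0'')
        have ht : s2 = s4 := Option.some.inj (w2.symm.trans hd2'')
        exact (hstne (hs.trans (ht.symm.trans e1))).elim
  · -- q = p + 2
    have e1 : s2 = s := Option.some.inj (ha0'.symm.trans ha2)
    have hst2ne : s ≠ t2 := by
      rw [← e1]; exact hstne'
    have hbdp : xb[p]? ≠ xd[p]? := by
      have : xd[p]? = xa[p]? := (hload p (by omega)).symm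
      rw [hb0, this, ha0]
      simp [Ne.symm hstne]
    have hbdp4 : xb[p+4]? ≠ xd[p+4]? := by
      have h1 : xb[p+4]? = xa[p+4]? := (hhiab (p+4) (by omega)).symm
      have h2 : xa[p+2+2]? = some s2 := ha2'
      have h3 : xd[p+2+2]? = some t2 := hd2
      have h4 : (p+2+2) = p + 4 := by omega
      rw [h4] at h2 h3
      rw [h1, h2, h3, e1]
      simp [hst2ne]
    have mp := cov p hbdp
    have mp4 := cov (p+4) hbdp4
    rcases mp with hcr | hcu
    · rcases Nat.lt_or_ge r p with h | h
      · have h1 : xb[r]? ≠ xc[r]? := (Dbc r).mpr (by omega)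
        have h2 : xb[r]? = xd[r]? := eqout r (by omega) (by omega)
        have h3 : xd[r]? ≠ xc[r]? := h2 ▸ h1
        have h4 := (Ddc r).mp h3
        rcases mp4 with h5 | h5 <;> omega
      · exact absurd (by omega : r = p) (fun hh => hrp hh)
    · rcases Nat.lt_or_ge u p with h | h
      · have h1 : xd[u]? ≠ xc[u]? := (Ddc u).mpr (by omega)
        have h2 : xb[u]? = xd[u]? := eqout u (by omega) (by omega)
        have h3 : xb[u]? ≠ xc[u]? := h2.symm ▸ h1
        have h4 := (Dbc u).mp h3
        rcases mp4 with h5 | h5 <;> omega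
      · have hup : u = p := by omega
        obtain ⟨s4, t4, _, _, hd0'', _, hd2'', _, _, _, _, _, _⟩ := bm_spec hdc
        rw [hup] at hd0'' hd2''
        have w0 : xd[p]? = some s := by rw [← hload p (by omega)]; exact ha0
        have w2 : xd[p+2]? = some t2 := hd0
        have hs : s = s4 := Option.some.inj (w0.symm.trans hd0'')
        have ht : t2 = s4 := Option.some.inj (w2.symm.trans hd2'')
        exact (hst2ne (hs.trans ht.symm)).elim
  · -- p + 3 ≤ q : disjoint case
    have db : ∀ i, p ≤ i → i ≤ p + 2 → xb[i]? ≠ xd[i]? := by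
      intro i h1 h2
      have e1 : xa[i]? ≠ xb[i]? := (Dab i).mpr (by omega)
      have e2 : xa[i]? = xd[i]? := by
        by_contra h'
        exact absurd ((Dad i).mp h') (by omega)
      rw [← e2]
      exact fun h => e1 h.symm
    have dd : ∀ i, q ≤ i → i ≤ q + 2 → xb[i]? ≠ xd[i]? := by
      intro i h1 h2
      have e1 : xa[i]? ≠ xd[i]? := (Dad i).mpr (by omega)
      have e2 : xa[i]? = xb[i]? := by
        by_contra h'
        exact absurd ((Dab i).mp h') (by omega)
      rw [← e2]
      exact e1
    have m0 := cov p (db p (by omega) (by omega))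
    have m1 := cov (p+1) (db (p+1) (by omega) (by omega))
    have m2 := cov (p+2) (db (p+2) (by omega) (by omega))
    have n0 := cov q (dd q (by omega) (by omega))
    have n1 := cov (q+1) (dd (q+1) (by omega) (by omega))
    have n2 := cov (q+2) (dd (q+2) (by omega) (by omega))
    rcases m0 with hcr | hcu
    · -- p ∈ [r,r+2]; derive r = p and contradiction
      have : r = p := by
        rcases n2 with h | h
        · omega
        · rcases m1 with h1 | h1
          · rcases m2 with h2 | h2 <;> omega
          · omega
      exact absurd this (fun hh => hrp hh)
    · -- p ∈ [u,u+2]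
      have hu : u = p := by
        rcases n2 with h | h
        · omega
        · rcases m1 with h1 | h1
          · omega
          · rcases m2 with h2 | h2 <;> omega
      have hr : r = q := by
        rcases n0 with h | h
        · rcases n2 with h' | h' <;> omega
        · omega
      exact ⟨hu, hr⟩

lemma core {M : CoxeterMatrix B} {xa xb xc xd : List B} {p q r u : ℕ}
    (hab : BraidMoveAt M xa xb p) (had : BraidMoveAt M xa xd q)
    (hbc : BraidMoveAt M xb xc r) (hdc : BraidMoveAt M xd xc u)
    (hca : xc ≠ xa) (hbd : xb ≠ xd) : u = p ∧ r = q := by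
  rcases lt_trichotomy p q with h | rfl | h
  · exact core' hab had hbc hdc hca h
  · exact absurd (bm_unique_target hab had) hbd
  · obtain ⟨h1, h2⟩ := core' had hab hdc hbc hca h
    exact ⟨h2, h1⟩

lemma edge_char {M : CoxeterMatrix B} {α x y : List B} {p : ℕ}
    (hxy : BraidMoveAt M x y p) (j : ℕ) :
    EdgeLabeled M α x y j ↔ (1 ≤ j ∧ j ≤ braidDim M α ∧ nthCenter M α j - 2 = p) := by
  constructor
  · rintro ⟨h1, h2, h3 | h3⟩
    · exact ⟨h1, h2, (bm_pos_unique hxy h3).symm⟩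
    · exact ⟨h1, h2, (bm_pos_unique hxy (bm_symm h3)).symm⟩
  · rintro ⟨h1, h2, h3⟩
    exact ⟨h1, h2, Or.inl (by rw [h3]; exact hxy)⟩

lemma adj_bm {M : CoxeterMatrix B} {α : List B} {x y : braidClass M α}
    (h : (braidGraph M α).Adj x y) : ∃ p, BraidMoveAt M x.1 y.1 p := by
  rw [braidGraph, SimpleGraph.fromRel_adj] at h
  rcases h.2 with ⟨p, hp⟩ | ⟨p, hp⟩
  · exact ⟨p, hp⟩
  · exact ⟨p, bm_symm hp⟩

theorem four_cycle_opposite_edges_same_label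
    {B W : Type*} [Group W] (M : CoxeterMatrix B) (cs : CoxeterSystem M W)
    (hM : TypeLambda M) (α : List B) (hα : cs.IsReduced α)
    (a b c d : braidClass M α)
    (hab : (braidGraph M α).Adj a b) (hbc : (braidGraph M α).Adj b c)
    (hcd : (braidGraph M α).Adj c d) (hda : (braidGraph M α).Adj d a)
    (hac : a ≠ c) (hbd : b ≠ d) :
    (∀ j : ℕ, EdgeLabeled M α a.1 b.1 j ↔ EdgeLabeled M α c.1 d.1 j) ∧
    (∀ j : ℕ, EdgeLabeled M α b.1 c.1 j ↔ EdgeLabeled M α d.1 a.1 j) := by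
  obtain ⟨pab, hab'⟩ := adj_bm hab
  obtain ⟨pbc, hbc'⟩ := adj_bm hbc
  obtain ⟨pcd, hcd'⟩ := adj_bm hcd
  obtain ⟨pda, hda'⟩ := adj_bm hda
  have hca' : c.1 ≠ a.1 := fun h => hac (Subtype.ext h).symm
  have hbd' : b.1 ≠ d.1 := fun h => hbd (Subtype.ext h)
  obtain ⟨h1, h2⟩ := core hab' (bm_symm hda') hbc' (bm_symm hcd') hca' hbd'
  constructor
  · intro j
    rw [edge_char hab' j, edge_char hcd' j, h1]
  · intro j
    rw [edge_char hbc' j, edge_char hda' j, h2]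

end Braid
end

section
/- Suppose (W,S) is a Coxeter system of type Λ and let α be a reduced expression. There exists β ∈ [α] having two disjoint braid shadows ⟦2i−1,2i+1⟧ and ⟦2j−1,2j+1⟧ if and only if the braid graph B(α) has a 4-cycle whose two pairs of opposite edges are labeled by i and by j respectively. -/
open scoped Classical

namespace Braid

variable {B : Type*}

/-! ### auxiliary lemmas -/

lemma ne_of_three {M : CoxeterMatrix B} {s t : B} (h : M s t = 3) : s ≠ t := by
  intro e; subst e; rw [M.diagonal] at h; omega

lemma block_struct {x : List B} {p : ℕ} {s t u : B}
    (h : x = x.take p ++ [s, t, u] ++ x.drop (p + 3)) :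
    (x.take p).length = p ∧ p + 3 ≤ x.length := by
  have hl := congrArg List.length h
  simp [List.length_append, List.length_take, List.length_drop] at hl
  constructor
  · simp [List.length_take]; omega
  · omega

lemma bma_decomp {M : CoxeterMatrix B} {x y : List B} {p : ℕ}
    (h : BraidMoveAt M x y p) :
    ∃ (A : List B) (s t : B) (R : List B), M s t = 3 ∧
      x = A ++ ([s, t, s] ++ R) ∧ y = A ++ ([t, s, t] ++ R) ∧ A.length = p := by
  obtain ⟨s, t, h3, hx, hy⟩ := h
  obtain ⟨hlen, -⟩ := block_struct hx
  refine ⟨x.take p, s, t, x.drop (p + 3), h3, ?_, ?_, hlen⟩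
  · rw [← List.append_assoc]; exact hx
  · rw [← List.append_assoc]; exact hy

lemma bma_of_decomp {M : CoxeterMatrix B} {s t : B} (A R : List B)
    (h3 : M s t = 3) :
    BraidMoveAt M (A ++ ([s, t, s] ++ R)) (A ++ ([t, s, t] ++ R)) A.length := by
  refine ⟨s, t, h3, ?_, ?_⟩ <;>
  · rw [show (A ++ ([s,t,s] ++ R)).take A.length = A by
        simp [List.take_append],
      show (A ++ ([s,t,s] ++ R)).drop (A.length + 3) = R by
        simp [List.drop_append]]
    simp

lemma mac_decomp {M : CoxeterMatrix B} {x y : List B} {c : ℕ}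
    (h : MoveAtCenter M x y c) :
    ∃ (A : List B) (s t : B) (R : List B), M s t = 3 ∧
      x = A ++ ([s, t, s] ++ R) ∧ y = A ++ ([t, s, t] ++ R) ∧ A.length = c - 2 := by
  rcases h with h | h
  · exact bma_decomp h
  · obtain ⟨A, s, t, R, h3, hy, hx, hl⟩ := bma_decomp h
    exact ⟨A, t, s, R, by rw [M.symmetric]; exact h3, hx, hy, hl⟩

lemma mac_of_decomp {M : CoxeterMatrix B} {s t : B} {x y : List B} {c : ℕ} (A R : List B)
    (h3 : M s t = 3) (hx : x = A ++ ([s, t, s] ++ R)) (hy : y = A ++ ([t, s, t] ++ R))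
    (hl : A.length = c - 2) : MoveAtCenter M x y c := by
  left; rw [hx, hy, ← hl]; exact bma_of_decomp A R h3

lemma shadow_decomp {M : CoxeterMatrix B} {β : List B} {c : ℕ}
    (h : ShadowCenter M β c) :
    ∃ (A : List B) (s t : B) (R : List B), M s t = 3 ∧
      β = A ++ ([s, t, s] ++ R) ∧ A.length = c - 2 := by
  obtain ⟨hc, s, t, h3, heq⟩ := h
  rw [show c + 1 = (c - 2) + 3 by omega] at heq
  obtain ⟨hlen, -⟩ := block_struct heq
  exact ⟨β.take (c-2), s, t, β.drop (c-2+3), h3, by rw [← List.append_assoc]; exact heq, hlen⟩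

lemma shadow_of_decomp {M : CoxeterMatrix B} {s t : B} {β : List B} {c : ℕ} (A R : List B)
    (h3 : M s t = 3) (hβ : β = A ++ ([s, t, s] ++ R)) (hl : A.length = c - 2)
    (hc : 2 ≤ c) : ShadowCenter M β c := by
  refine ⟨hc, s, t, h3, ?_⟩
  have ht : (A ++ ([s,t,s] ++ R)).take (c-2) = A := by
    rw [← hl]; simp [List.take_append]
  have hd : (A ++ ([s,t,s] ++ R)).drop (c+1) = R := by
    rw [show c+1 = A.length + 3 by omega]
    simp [List.drop_append]
  rw [hβ, ht, hd, ← List.append_assoc]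

lemma block_ne {s t : B} (hst : s ≠ t) (A R1 R2 : List B) :
    A ++ ([s, t, s] ++ R1) ≠ A ++ ([t, s, t] ++ R2) := by
  intro h
  have h2 := (List.append_inj h rfl).2
  simp at h2
  exact hst h2.1

lemma shift2 {A D r q : List B} {x1 x2 : B}
    (h : A ++ x1 :: x2 :: r = D ++ q) (hl : D.length = A.length + 2) :
    D = A ++ [x1, x2] ∧ r = q := by
  have h' : (A ++ [x1, x2]) ++ r = D ++ q := by simpa using h
  have h2 := List.append_inj h' (by simp [hl])
  exact ⟨h2.1.symm, h2.2⟩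

lemma adj_of_bma {M : CoxeterMatrix B} {α : List B} {x y : braidClass M α} {p : ℕ}
    (h : BraidMoveAt M x.1 y.1 p) (hne : x.1 ≠ y.1) : (braidGraph M α).Adj x y := by
  refine (SimpleGraph.fromRel_adj _ x y).2 ⟨fun e => hne (congrArg Subtype.val e), ?_⟩
  exact Or.inl ⟨p, h⟩

/-- The square construction. -/
lemma forward_case {M : CoxeterMatrix B} {α β : List B} (hβ : β ∈ braidClass M α)
    {ci cj : ℕ} (hci : ShadowCenter M β ci) (hcj : ShadowCenter M β cj)
    (h : ci + 3 ≤ cj) :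
    ∃ a b c d : braidClass M α,
      (braidGraph M α).Adj a b ∧ (braidGraph M α).Adj b c ∧
      (braidGraph M α).Adj c d ∧ (braidGraph M α).Adj d a ∧ a ≠ c ∧ b ≠ d ∧
      MoveAtCenter M a.1 b.1 ci ∧ MoveAtCenter M c.1 d.1 ci ∧
      MoveAtCenter M b.1 c.1 cj ∧ MoveAtCenter M d.1 a.1 cj := by
  obtain ⟨A, s, t, R, hst3, hβ1, hAl⟩ := shadow_decomp hci
  obtain ⟨A', u, v, C, huv3, hβ2, hA'l⟩ := shadow_decomp hcj
  have hci2 : 2 ≤ ci := hci.1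
  have hcj2 : 2 ≤ cj := hcj.1
  have hst : s ≠ t := ne_of_three hst3
  have huv : u ≠ v := ne_of_three huv3
  -- split A'
  have hlen : ci + 1 ≤ A'.length := by omega
  have hsplit : (A ++ [s,t,s]) ++ R = (A'.take (ci+1)) ++ (A'.drop (ci+1) ++ ([u,v,u] ++ C)) := by
    rw [← List.append_assoc, List.take_append_drop]
    rw [List.append_assoc]; rw [← hβ1, hβ2]
  obtain ⟨hpre, hR⟩ := List.append_inj hsplit (by simp; omega)
  set Bm := A'.drop (ci + 1) with hBm
  have hBml : Bm.length = cj - ci - 3 := by simp [hBm]; omega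
  -- the four words
  set X := Bm ++ ([u,v,u] ++ C) with hX
  set X' := Bm ++ ([v,u,v] ++ C) with hX'
  have hw00 : β = A ++ ([s,t,s] ++ X) := by rw [hβ1, hR]
  set w10 := A ++ ([t,s,t] ++ X) with hw10
  set w11 := A ++ ([t,s,t] ++ X') with hw11
  set w01 := A ++ ([s,t,s] ++ X') with hw01
  -- left braid moves
  have L0 : BraidMoveAt M β w10 (ci - 2) := by
    rw [hw00, ← hAl]; exact bma_of_decomp A X hst3
  have L1 : BraidMoveAt M w01 w11 (ci - 2) := by
    rw [← hAl]; exact bma_of_decomp A X' hst3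
  -- right braid moves
  have hA2l : (A ++ ([s,t,s] ++ Bm)).length = cj - 2 := by simp; omega
  have hA2l' : (A ++ ([t,s,t] ++ Bm)).length = cj - 2 := by simp; omega
  have e0 : β = (A ++ ([s,t,s] ++ Bm)) ++ ([u,v,u] ++ C) := by
    rw [hw00, hX]; simp [List.append_assoc]
  have e0' : w01 = (A ++ ([s,t,s] ++ Bm)) ++ ([v,u,v] ++ C) := by
    rw [hw01, hX']; simp [List.append_assoc]
  have e1 : w10 = (A ++ ([t,s,t] ++ Bm)) ++ ([u,v,u] ++ C) := by
    rw [hw10, hX]; simp [List.append_assoc]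
  have e1' : w11 = (A ++ ([t,s,t] ++ Bm)) ++ ([v,u,v] ++ C) := by
    rw [hw11, hX']; simp [List.append_assoc]
  have R0 : BraidMoveAt M β w01 (cj - 2) := by
    rw [e0, e0', ← hA2l]; exact bma_of_decomp _ C huv3
  have R1 : BraidMoveAt M w10 w11 (cj - 2) := by
    rw [e1, e1', ← hA2l']; exact bma_of_decomp _ C huv3
  -- memberships
  have m00 : β ∈ braidClass M α := hβ
  have m10 : w10 ∈ braidClass M α := Relation.ReflTransGen.tail m00 ⟨_, L0⟩
  have m01 : w01 ∈ braidClass M α := Relation.ReflTransGen.tail m00 ⟨_, R0⟩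
  have m11 : w11 ∈ braidClass M α := Relation.ReflTransGen.tail m10 ⟨_, R1⟩
  -- inequalities between words
  have ne_left0 : β ≠ w10 := by rw [hw00, hw10]; exact block_ne hst A X X
  have ne_left1 : w01 ≠ w11 := by rw [hw01, hw11]; exact block_ne hst A X' X'
  have ne_right0 : β ≠ w01 := by rw [e0, e0']; exact block_ne huv _ C C
  have ne_right1 : w10 ≠ w11 := by rw [e1, e1']; exact block_ne huv _ C C
  have ne_diag : β ≠ w11 := by rw [hw00, hw11]; exact block_ne hst A X X'
  have ne_anti : w10 ≠ w01 := by
    rw [hw10, hw01]; exact fun h => (block_ne hst A X' X) h.symm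
  refine ⟨⟨β, m00⟩, ⟨w10, m10⟩, ⟨w11, m11⟩, ⟨w01, m01⟩, ?_, ?_, ?_, ?_, ?_, ?_, ?_, ?_, ?_, ?_⟩
  · exact adj_of_bma L0 ne_left0
  · exact adj_of_bma R1 ne_right1
  · exact (adj_of_bma L1 ne_left1).symm
  · exact (adj_of_bma R0 ne_right0).symm
  · exact fun e => ne_diag (congrArg Subtype.val e)
  · exact fun e => ne_anti (congrArg Subtype.val e)
  · exact Or.inl L0
  · exact Or.inr L1
  · exact Or.inl R1
  · exact Or.inr R0

theorem disjoint_shadows_iff_four_cycle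
    {B W : Type*} [Group W] (M : CoxeterMatrix B) (cs : CoxeterSystem M W)
    (hM : TypeLambda M) (α : List B) (hα : cs.IsReduced α)
    (i j : ℕ) (hi : 1 ≤ i) (hj : 1 ≤ j) :
    (∃ β ∈ braidClass M α, ShadowCenter M β (2 * i) ∧ ShadowCenter M β (2 * j) ∧
        Disjoint (Set.Icc (2 * i - 1) (2 * i + 1))
          (Set.Icc (2 * j - 1) (2 * j + 1) : Set ℕ)) ↔
      (∃ a b c d : braidClass M α,
        (braidGraph M α).Adj a b ∧ (braidGraph M α).Adj b c ∧
        (braidGraph M α).Adj c d ∧ (braidGraph M α).Adj d a ∧ a ≠ c ∧ b ≠ d ∧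
        MoveAtCenter M a.1 b.1 (2 * i) ∧ MoveAtCenter M c.1 d.1 (2 * i) ∧
        MoveAtCenter M b.1 c.1 (2 * j) ∧ MoveAtCenter M d.1 a.1 (2 * j)) := by
  constructor
  · rintro ⟨β, hβ, hsi, hsj, hdisj⟩
    have hkey : 2 * i + 3 ≤ 2 * j ∨ 2 * j + 3 ≤ 2 * i := by
      by_contra hcon
      push_neg at hcon
      have h1 : max (2 * i - 1) (2 * j - 1) ∈ Set.Icc (2 * i - 1) (2 * i + 1) := by
        simp only [Set.mem_Icc]; omega
      have h2 : max (2 * i - 1) (2 * j - 1) ∈ Set.Icc (2 * j - 1) (2 * j + 1) := by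
        simp only [Set.mem_Icc]; omega
      exact Set.disjoint_left.mp hdisj h1 h2
    rcases hkey with hk | hk
    · exact forward_case hβ hsi hsj hk
    · obtain ⟨a', b', c', d', hab, hbc, hcd, hda, hac, hbd, m1, m2, m3, m4⟩ :=
        forward_case hβ hsj hsi hk
      exact ⟨b', c', d', a', hbc, hcd, hda, hab, hbd, fun e => hac e.symm,
        m3, m4, m2, m1⟩
  · rintro ⟨a, b, c, d, hab, hbc, hcd, hda, hac, hbd, mab, mcd, mbc, mda⟩
    obtain ⟨A, s, t, R, hst3, ha1, hb1, hAl⟩ := mac_decomp mab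
    obtain ⟨D, u, v, Q, huv3, hd1, ha2, hDl⟩ := mac_decomp mda
    obtain ⟨E, w, z, P, hwz3, hb2, hc2, hEl⟩ := mac_decomp mbc
    have hst : s ≠ t := ne_of_three hst3
    have ha1' : a.1 = A ++ s :: t :: s :: R := by simpa using ha1
    have hb1' : b.1 = A ++ t :: s :: t :: R := by simpa using hb1
    have ha2' : a.1 = D ++ v :: u :: v :: Q := by simpa using ha2
    have hb2' : b.1 = E ++ w :: z :: w :: P := by simpa using hb2
    -- a has shadows at 2i and 2j
    have hsi : ShadowCenter M a.1 (2 * i) := shadow_of_decomp A R hst3 ha1 hAl (by omega)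
    have hsj : ShadowCenter M a.1 (2 * j) := by
      refine shadow_of_decomp (M := M) (s := v) (t := u) D Q ?_ ?_ hDl (by omega)
      · rw [M.symmetric]; exact huv3
      · exact ha2
    refine ⟨a.1, a.2, hsi, hsj, ?_⟩
    -- disjointness: exclude |2i - 2j| ≤ 2
    have hcase : 2 * j = 2 * i ∨ 2 * j = 2 * i + 2 ∨ 2 * i = 2 * j + 2 ∨
        2 * i + 4 ≤ 2 * j ∨ 2 * j + 4 ≤ 2 * i := by omega
    have hne_ij1 : 2 * j ≠ 2 * i := by
      intro he
      -- then c = a, contradiction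
      have hEA : E.length = A.length := by omega
      have hb12 : A ++ ([t,s,t] ++ R) = E ++ ([w,z,w] ++ P) := by rw [← hb1, hb2]
      obtain ⟨hAE, hrest⟩ := List.append_inj hb12 hEA.symm
      simp only [List.cons_append, List.nil_append, List.cons.injEq] at hrest
      obtain ⟨hw, hz, hwr⟩ := hrest
      obtain ⟨hw2, hRP⟩ := hwr
      subst hAE; subst hw; subst hz; subst hRP
      exact hac (Subtype.ext (ha1.trans hc2.symm))
    have hne_ij2 : 2 * j ≠ 2 * i + 2 := by
      intro he
      obtain ⟨hD, e2⟩ := shift2 (ha1'.symm.trans ha2') (by omega)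
      simp only [List.cons.injEq] at e2
      obtain ⟨hsv, hRQ⟩ := e2
      have h2 : A ++ t :: s :: t :: u :: v :: Q = E ++ w :: z :: w :: P := by
        rw [← hRQ]; exact hb1'.symm.trans hb2'
      obtain ⟨-, e4⟩ := shift2 h2 (by omega)
      simp only [List.cons.injEq] at e4
      obtain ⟨htw, -, hvw, -⟩ := e4
      exact hst (hsv.trans (hvw.trans htw.symm))
    have hne_ij3 : 2 * i ≠ 2 * j + 2 := by
      intro he
      obtain ⟨hA, e2⟩ := shift2 (ha2'.symm.trans ha1') (by omega)
      simp only [List.cons.injEq] at e2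
      obtain ⟨hvs, hQ⟩ := e2
      have h2 : D ++ v :: u :: t :: s :: t :: R = E ++ w :: z :: w :: P := by
        have h3 := hb1'.symm.trans hb2'
        rw [hA] at h3
        simpa using h3
      obtain ⟨-, e4⟩ := List.append_inj h2 (by omega)
      simp only [List.cons.injEq] at e4
      obtain ⟨hvw, -, htw, -⟩ := e4
      exact hst (hvs.symm.trans (hvw.trans htw.symm))
    have hfar : 2 * i + 4 ≤ 2 * j ∨ 2 * j + 4 ≤ 2 * i := by
      rcases hcase with h | h | h | h | h
      · exact absurd h hne_ij1
      · exact absurd h hne_ij2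
      · exact absurd h hne_ij3
      · exact Or.inl h
      · exact Or.inr h
    rw [Set.disjoint_left]
    intro x hx1 hx2
    simp only [Set.mem_Icc] at hx1 hx2
    omega

end Braid
end
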